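/- arXiv:2411.08986 — 7 statements merged into one kernel-verified Lean document; each statement's English description precedes it below -/
import Mathlib

section
/- Let Δt ≥ 0 and H ≥ 0 be real numbers, and let (a_n), (b_n), (c_n), (d_n) be sequences of nonnegative real numbers (indexed by integers n ≥ 0) such that for every integer l ≥ 0, a_l + Δt·Σ_{n=0}^{l} b_n ≤ Δt·Σ_{n=0}^{l} d_n·a_n + Δt·Σ_{n=0}^{l} c_n + H. Suppose moreover that Δt·d_n < 1 for all n. Then for every integer l ≥ 0, a_l + Δt·Σ_{n=0}^{l} b_n ≤ exp( Δt·Σ_{n=0}^{l} d_n/(1 − Δt·d_n) ) · ( Δt·Σ_{n=0}^{l} c_n + H ). -/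
/-!
Put `x n = Δt d n` and `s l = Δt ∑_{n ≤ l} c n + H`, and let `M l = ∑_{n ≤ l} x n a n + s l` be the
right-hand side of the hypothesis. Since `a l ≤ M l`, the implicit term `x l a l` of `M l` can be
absorbed into the left: `(1 - x l) M l ≤ M (l - 1) + (s l - s (l - 1))`. Inductively,
`M l ≤ ∏_{n ≤ l} (1 - x n)⁻¹ · s l`, and `(1 - x)⁻¹ = 1 + x / (1 - x) ≤ exp (x / (1 - x))`.
-/

namespace DiscreteGronwallPaper

open Finset Real

theorem inv_one_sub_le_exp_div_one_sub {x : ℝ} (hx : x < 1) : (1 - x)⁻¹ ≤ exp (x / (1 - x)) :=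
  calc (1 - x)⁻¹ = x / (1 - x) + 1 := by field_simp [(sub_pos.2 hx).ne']; ring
    _ ≤ exp (x / (1 - x)) := add_one_le_exp _

theorem prod_inv_one_sub_le_exp_sum {ι : Type*} (s : Finset ι) {x : ι → ℝ} (hx : ∀ i, x i < 1) :
    ∏ i ∈ s, (1 - x i)⁻¹ ≤ exp (∑ i ∈ s, x i / (1 - x i)) := by
  rw [exp_sum]
  exact prod_le_prod (fun i _ ↦ inv_nonneg.2 (sub_pos.2 (hx i)).le)
    fun i _ ↦ inv_one_sub_le_exp_div_one_sub (hx i)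

theorem one_le_prod_inv_one_sub {ι : Type*} (s : Finset ι) {x : ι → ℝ} (hx₀ : ∀ i, 0 ≤ x i)
    (hx₁ : ∀ i, x i < 1) : 1 ≤ ∏ i ∈ s, (1 - x i)⁻¹ :=
  one_le_prod fun i _ ↦ (one_le_inv₀ (sub_pos.2 (hx₁ i))).2 (by linarith [hx₀ i])

theorem sum_mul_add_le_prod_inv_one_sub_mul {u x s : ℕ → ℝ} (hx₀ : ∀ n, 0 ≤ x n)
    (hx₁ : ∀ n, x n < 1) (hs : Monotone s)
    (hu : ∀ l, u l ≤ ∑ n ∈ range (l + 1), x n * u n + s l) (l : ℕ) :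
    ∑ n ∈ range (l + 1), x n * u n + s l ≤ (∏ n ∈ range (l + 1), (1 - x n)⁻¹) * s l := by
  have absorb : ∀ l, (1 - x l) * (∑ n ∈ range (l + 1), x n * u n + s l) ≤
      ∑ n ∈ range l, x n * u n + s l := by
    intro l
    have h := mul_le_mul_of_nonneg_left (hu l) (hx₀ l)
    rw [sum_range_succ] at h ⊢
    linarith
  induction l with
  | zero =>
    rw [prod_range_one, le_inv_mul_iff₀ (sub_pos.2 (hx₁ 0))]
    simpa using absorb 0
  | succ l ih =>
    have hP := one_le_prod_inv_one_sub (range (l + 1)) hx₀ hx₁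
    have hs_succ := hs l.le_succ
    rw [prod_range_succ, mul_comm _ (1 - x (l + 1))⁻¹, mul_assoc,
      le_inv_mul_iff₀ (sub_pos.2 (hx₁ (l + 1)))]
    calc (1 - x (l + 1)) * (∑ n ∈ range (l + 1 + 1), x n * u n + s (l + 1))
        ≤ ∑ n ∈ range (l + 1), x n * u n + s l + (s (l + 1) - s l) := by
          linarith [absorb (l + 1)]
      _ ≤ (∏ n ∈ range (l + 1), (1 - x n)⁻¹) * s l + (s (l + 1) - s l) := by gcongr
      _ ≤ (∏ n ∈ range (l + 1), (1 - x n)⁻¹) * s (l + 1) := by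
        linarith [mul_nonneg (sub_nonneg.2 hP) (sub_nonneg.2 hs_succ)]

theorem discrete_gronwall_general
    (Δt H : ℝ) (hΔt : 0 ≤ Δt) (hH : 0 ≤ H)
    (a b c d : ℕ → ℝ)
    (hb : ∀ n, 0 ≤ b n) (hc : ∀ n, 0 ≤ c n) (hd : ∀ n, 0 ≤ d n)
    (hbound : ∀ l : ℕ,
      a l + Δt * ∑ n ∈ Finset.range (l + 1), b n ≤
        Δt * ∑ n ∈ Finset.range (l + 1), d n * a n
          + Δt * ∑ n ∈ Finset.range (l + 1), c n + H)
    (hsmall : ∀ n : ℕ, Δt * d n < 1) :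
    ∀ l : ℕ,
      a l + Δt * ∑ n ∈ Finset.range (l + 1), b n ≤
        Real.exp (Δt * ∑ n ∈ Finset.range (l + 1), d n / (1 - Δt * d n))
          * (Δt * ∑ n ∈ Finset.range (l + 1), c n + H) := by
  intro l
  set s : ℕ → ℝ := fun k ↦ Δt * ∑ n ∈ range (k + 1), c n + H
  have hs : Monotone s := monotone_nat_of_le_succ fun k ↦ by
    simp only [s, sum_range_succ]
    linarith [mul_nonneg hΔt (hc (k + 1))]
  have hs₀ : 0 ≤ s l := by have := sum_nonneg fun n (_ : n ∈ range (l + 1)) ↦ hc n; positivity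
  have hbound' : ∀ k, a k + Δt * ∑ n ∈ range (k + 1), b n ≤
      ∑ n ∈ range (k + 1), Δt * d n * a n + s k := fun k ↦ by
    simp only [mul_assoc, ← mul_sum]
    exact (hbound k).trans_eq (add_assoc _ _ _)
  have ha_le : ∀ k, a k ≤ ∑ n ∈ range (k + 1), Δt * d n * a n + s k := fun k ↦
    (le_add_of_nonneg_right (mul_nonneg hΔt (sum_nonneg fun n _ ↦ hb n))).trans (hbound' k)
  calc a l + Δt * ∑ n ∈ range (l + 1), b n
      ≤ ∑ n ∈ range (l + 1), Δt * d n * a n + s l := hbound' l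
    _ ≤ (∏ n ∈ range (l + 1), (1 - Δt * d n)⁻¹) * s l :=
      sum_mul_add_le_prod_inv_one_sub_mul (fun n ↦ mul_nonneg hΔt (hd n)) hsmall hs
        ha_le l
    _ ≤ exp (Δt * ∑ n ∈ range (l + 1), d n / (1 - Δt * d n)) * s l := by
      rw [mul_sum]
      simp only [← mul_div_assoc]
      gcongr
      exact prod_inv_one_sub_le_exp_sum _ hsmall

/-- **Discrete Gronwall Lemma.**
Let `Δt ≥ 0`, `H ≥ 0`, and let `a b c d : ℕ → ℝ` be nonnegative sequences such that
for every `l ≥ 0`,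
`a l + Δt·Σ_{n=0}^{l} b n ≤ Δt·Σ_{n=0}^{l} (d n * a n) + Δt·Σ_{n=0}^{l} c n + H`.
If `Δt * d n < 1` for all `n`, then for every `l ≥ 0`,
`a l + Δt·Σ_{n=0}^{l} b n ≤ exp(Δt·Σ_{n=0}^{l} d n / (1 - Δt * d n)) · (Δt·Σ_{n=0}^{l} c n + H)`. -/
theorem discrete_gronwall
    (Δt H : ℝ) (hΔt : 0 ≤ Δt) (hH : 0 ≤ H)
    (a b c d : ℕ → ℝ)
    (ha : ∀ n, 0 ≤ a n) (hb : ∀ n, 0 ≤ b n) (hc : ∀ n, 0 ≤ c n) (hd : ∀ n, 0 ≤ d n)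
    (hbound : ∀ l : ℕ,
      a l + Δt * ∑ n ∈ Finset.range (l + 1), b n ≤
        Δt * ∑ n ∈ Finset.range (l + 1), d n * a n
          + Δt * ∑ n ∈ Finset.range (l + 1), c n + H)
    (hsmall : ∀ n : ℕ, Δt * d n < 1) :
    ∀ l : ℕ,
      a l + Δt * ∑ n ∈ Finset.range (l + 1), b n ≤
        Real.exp (Δt * ∑ n ∈ Finset.range (l + 1), d n / (1 - Δt * d n))
          * (Δt * ∑ n ∈ Finset.range (l + 1), c n + H) :=
  discrete_gronwall_general Δt H hΔt hH a b c d hb hc hd hbound hsmall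

end DiscreteGronwallPaper
end

section
/- Let V and W be real inner product spaces, let D : V → W be a linear map, and let φ_1, …, φ_r be an orthonormal family in V. Let S be the r×r real matrix with entries S_{ij} = ⟨D φ_j, D φ_i⟩_W (so S is symmetric positive semidefinite). Then for every u in the linear span of {φ_1, …, φ_r}, ‖D u‖_W ≤ sqrt(‖S‖₂) · ‖u‖_V, where ‖S‖₂ denotes the operator norm of S induced by the Euclidean norm on ℝ^r. -/
/-!
Writing `u = ∑ cᵢ φᵢ`, the Gram matrix `S` of the vectors `D φᵢ` satisfies
`‖D u‖² = ⟪c, S c⟫ ≤ ‖S‖₂ ‖c‖²`, and orthonormality of the `φᵢ` gives `‖c‖ = ‖u‖`.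
-/

open scoped RealInnerProductSpace

open Matrix WithLp

section

variable {𝕜 E ι : Type*} [RCLike 𝕜] [NormedAddCommGroup E] [InnerProductSpace 𝕜 E] [Fintype ι]

theorem ContinuousLinearMap.re_inner_self_apply_le (T : E →L[𝕜] E) (x : E) :
    RCLike.re (inner 𝕜 x (T x)) ≤ ‖T‖ * ‖x‖ ^ 2 :=
  calc RCLike.re (inner 𝕜 x (T x)) ≤ ‖x‖ * ‖T x‖ := re_inner_le_norm x (T x)
    _ ≤ ‖x‖ * (‖T‖ * ‖x‖) := by gcongr; exact T.le_opNorm x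
    _ = ‖T‖ * ‖x‖ ^ 2 := by ring

theorem Orthonormal.norm_sum_smul {v : ι → E} (hv : Orthonormal 𝕜 v) (c : ι → 𝕜) :
    ‖∑ i, c i • v i‖ = ‖toLp 2 c‖ := by
  refine (sq_eq_sq₀ (norm_nonneg _) (norm_nonneg _)).mp ?_
  rw [@norm_sq_eq_re_inner 𝕜, hv.inner_sum, EuclideanSpace.norm_sq_eq]
  simp only [RCLike.conj_mul, map_sum, RCLike.re_ofReal_pow]

theorem norm_sum_smul_sq_le_opNorm_gram [DecidableEq ι] (w : ι → E) (c : ι → 𝕜) :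
    ‖∑ i, c i • w i‖ ^ 2 ≤ ‖toEuclideanCLM (𝕜 := 𝕜) (gram 𝕜 w)‖ * ‖toLp 2 c‖ ^ 2 := by
  have h := (toEuclideanCLM (𝕜 := 𝕜) (gram 𝕜 w)).re_inner_self_apply_le (toLp 2 c)
  rwa [toEuclideanCLM_toLp, EuclideanSpace.inner_toLp_toLp, dotProduct_comm,
    star_dotProduct_gram_mulVec, ← @norm_sq_eq_re_inner 𝕜] at h

end

/-- **POD inverse estimate.**
Let `V`, `W` be real inner product spaces, `D : V → W` linear, and `φ 0, …, φ (r-1)` an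
orthonormal family in `V`.  Let `S` be the `r × r` matrix with `S i j = ⟪D (φ j), D (φ i)⟫`.
Then for every `u` in the span of the `φ j`,
`‖D u‖ ≤ sqrt(‖S‖₂) * ‖u‖`, where `‖S‖₂` is the operator norm of `S` induced by the
Euclidean norm on `ℝ^r`. -/
theorem pod_inverse_estimate
    {V W : Type*} [NormedAddCommGroup V] [InnerProductSpace ℝ V]
    [NormedAddCommGroup W] [InnerProductSpace ℝ W]
    (r : ℕ) (D : V →ₗ[ℝ] W) (φ : Fin r → V) (hφ : Orthonormal ℝ φ)
    (S : Matrix (Fin r) (Fin r) ℝ)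
    (hS : ∀ i j, S i j = ⟪D (φ j), D (φ i)⟫)
    (u : V) (hu : u ∈ Submodule.span ℝ (Set.range φ)) :
    ‖D u‖ ≤ Real.sqrt ‖Matrix.toEuclideanCLM (𝕜 := ℝ) S‖ * ‖u‖ := by
  obtain ⟨c, rfl⟩ := (Submodule.mem_span_range_iff_exists_fun ℝ).mp hu
  have hS_gram : S = gram ℝ (fun i ↦ D (φ i)) :=
    Matrix.ext fun i j ↦ (hS i j).trans (real_inner_comm _ _)
  have hsq : ‖D (∑ i, c i • φ i)‖ ^ 2
      ≤ ‖Matrix.toEuclideanCLM (𝕜 := ℝ) S‖ * ‖∑ i, c i • φ i‖ ^ 2 := by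
    simp only [map_sum, map_smul, hφ.norm_sum_smul, hS_gram]
    exact norm_sum_smul_sq_le_opNorm_gram _ c
  rw [← Real.sqrt_sq (norm_nonneg (∑ i, c i • φ i)), ← Real.sqrt_mul (norm_nonneg _)]
  exact Real.le_sqrt_of_sq_le hsq
end

section
/- Let H and K be real inner product spaces, let D : H → K be a linear map, let u_0, …, u_M ∈ H be snapshots, and let φ_1, …, φ_R be an orthonormal family in H such that every u_l lies in the span of {φ_1, …, φ_R} and such that the POD diagonalization property holds: (1/(M+1))·Σ_{l=0}^{M} ⟨u_l, φ_i⟩⟨u_l, φ_j⟩ = λ_i·δ_{ij} for all 1 ≤ i, j ≤ R, with λ_j ≥ 0. Then for every 0 ≤ r ≤ R, (1/(M+1))·Σ_{l=0}^{M} ‖D( u_l − Σ_{j=1}^{r} ⟨u_l, φ_j⟩ φ_j )‖²_K = Σ_{j=r+1}^{R} ‖D φ_j‖²_K · λ_j. -/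
open scoped RealInnerProductSpace

/-- **`H¹₀` POD projection error formula.**
Let `D : H → K` be linear between real inner product spaces, `u 0, …, u M` snapshots in `H`,
and `φ` an orthonormal family (indexed by `Fin R`) spanning the snapshots and satisfying the
POD diagonalization property
`(1/(M+1)) Σ_l ⟪u l, φ i⟫ ⟪u l, φ j⟫ = lam i · δ_{ij}` with `lam j ≥ 0`.
Then for every `0 ≤ r ≤ R`,
`(1/(M+1)) Σ_l ‖D (u l − Σ_{j<r} ⟪u l, φ j⟫ φ j)‖² = Σ_{j≥r} ‖D (φ j)‖² · lam j`. -/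
theorem pod_projection_error_H10
    {H K : Type*} [NormedAddCommGroup H] [InnerProductSpace ℝ H]
    [NormedAddCommGroup K] [InnerProductSpace ℝ K]
    (D : H →ₗ[ℝ] K)
    (M R : ℕ) (u : Fin (M + 1) → H) (φ : Fin R → H) (lam : Fin R → ℝ)
    (hφ : Orthonormal ℝ φ)
    (hspan : ∀ l, u l ∈ Submodule.span ℝ (Set.range φ))
    (hlam : ∀ j, 0 ≤ lam j)
    (hdiag : ∀ i j : Fin R,
      (1 / (M + 1 : ℝ)) * ∑ l, ⟪u l, φ i⟫ * ⟪u l, φ j⟫ = if i = j then lam i else 0) :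
    ∀ r : ℕ, r ≤ R →
      (1 / (M + 1 : ℝ)) *
          ∑ l, ‖D (u l - ∑ j ∈ Finset.univ.filter (fun j : Fin R => (j : ℕ) < r),
            ⟪u l, φ j⟫ • φ j)‖ ^ 2
        = ∑ j ∈ Finset.univ.filter (fun j : Fin R => r ≤ (j : ℕ)),
            ‖D (φ j)‖ ^ 2 * lam j := by

  intro r hr
  set S := Finset.univ.filter (fun j : Fin R => r ≤ (j : ℕ)) with hS
  -- representation of snapshots
  have hrep : ∀ l, u l = ∑ j, ⟪u l, φ j⟫ • φ j := by
    intro l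
    obtain ⟨c, hc⟩ := (Submodule.mem_span_range_iff_exists_fun ℝ).mp (hspan l)
    have hcoef : ∀ j, ⟪u l, φ j⟫ = c j := by
      intro j
      rw [← hc]
      simpa using hφ.inner_left_fintype c j
    conv_lhs => rw [← hc]
    exact Finset.sum_congr rfl fun j _ => by rw [hcoef]
  -- the residual is the tail sum
  have hres : ∀ l, u l - ∑ j ∈ Finset.univ.filter (fun j : Fin R => (j : ℕ) < r),
      ⟪u l, φ j⟫ • φ j = ∑ j ∈ S, ⟪u l, φ j⟫ • φ j := by
    intro l
    have key : ∀ c : Fin R → ℝ,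
        (∑ j, c j • φ j) - ∑ j ∈ Finset.univ.filter (fun j : Fin R => (j : ℕ) < r),
          c j • φ j = ∑ j ∈ S, c j • φ j := by
      intro c
      have hsplit := Finset.sum_filter_add_sum_filter_not Finset.univ
        (fun j : Fin R => (j : ℕ) < r) (fun j => c j • φ j)
      have hSeq : Finset.univ.filter (fun j : Fin R => ¬ (j : ℕ) < r) = S := by
        simp [hS, not_lt]
      rw [hSeq] at hsplit
      rw [sub_eq_iff_eq_add, add_comm, hsplit]
    nth_rewrite 1 [hrep l]
    exact key _
  -- expand the norm squared
  have hnorm : ∀ l, ‖D (u l - ∑ j ∈ Finset.univ.filter (fun j : Fin R => (j : ℕ) < r),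
      ⟪u l, φ j⟫ • φ j)‖ ^ 2
      = ∑ i ∈ S, ∑ j ∈ S, ⟪D (φ i), D (φ j)⟫ * (⟪u l, φ i⟫ * ⟪u l, φ j⟫) := by
    intro l
    rw [hres l]
    rw [← real_inner_self_eq_norm_sq]
    rw [map_sum]
    rw [sum_inner]
    refine Finset.sum_congr rfl fun i _ => ?_
    rw [inner_sum]
    refine Finset.sum_congr rfl fun j _ => ?_
    simp [map_smul, real_inner_smul_left, real_inner_smul_right]
    ring
  calc (1 / (M + 1 : ℝ)) *
          ∑ l, ‖D (u l - ∑ j ∈ Finset.univ.filter (fun j : Fin R => (j : ℕ) < r),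
            ⟪u l, φ j⟫ • φ j)‖ ^ 2
      = ∑ i ∈ S, ∑ j ∈ S, ⟪D (φ i), D (φ j)⟫ *
          ((1 / (M + 1 : ℝ)) * ∑ l, ⟪u l, φ i⟫ * ⟪u l, φ j⟫) := by
        simp only [hnorm, Finset.mul_sum]
        rw [Finset.sum_comm]
        refine Finset.sum_congr rfl fun i _ => ?_
        rw [Finset.sum_comm]
        exact Finset.sum_congr rfl fun j _ => Finset.sum_congr rfl fun l _ => by ring
    _ = ∑ i ∈ S, ∑ j ∈ S, (if i = j then ⟪D (φ i), D (φ i)⟫ * lam i else 0) := by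
        refine Finset.sum_congr rfl fun i _ => Finset.sum_congr rfl fun j _ => ?_
        rw [hdiag i j]
        by_cases h : i = j
        · subst h; simp
        · simp [h]
    _ = ∑ j ∈ S, ‖D (φ j)‖ ^ 2 * lam j := by
        refine Finset.sum_congr rfl fun i hi => ?_
        rw [Finset.sum_ite_eq S i (fun j => ⟪D (φ i), D (φ i)⟫ * lam i)]
        simp [hi, real_inner_self_eq_norm_sq]
end

section
/- Let H be a real inner product space, let X_r ⊆ H be a finite-dimensional subspace, let a : H × H → ℝ be a symmetric bilinear form with a(v, v) ≥ 0 for all v ∈ H, let δ > 0, and let G_r : H → X_r denote the filter sending u to the unique ū ∈ X_r with δ²·a(ū, v) + ⟨ū, v⟩ = ⟨u, v⟩ for all v ∈ X_r. Then G_r is symmetric and its quadratic form is bounded between 0 and the squared norm: for all u, w ∈ H, ⟨G_r u, w⟩ = ⟨u, G_r w⟩ and 0 ≤ ⟨G_r u, u⟩ ≤ ‖u‖². In particular, the operator I − G_r is symmetric and positive semidefinite. -/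
open scoped RealInnerProductSpace

/-- **Symmetry and boundedness of the ROM differential filter.**
Let `G : H → H` be the ROM differential filter: `G u ∈ Xr` and
`δ² a(G u, v) + ⟪G u, v⟫ = ⟪u, v⟫` for all `v ∈ Xr`, where `Xr` is a finite-dimensional
subspace, `a` a symmetric positive semidefinite bilinear form, and `δ > 0`.
Then `G` is symmetric and its quadratic form lies between `0` and the squared norm:
`⟪G u, w⟫ = ⟪u, G w⟫` and `0 ≤ ⟪G u, u⟫ ≤ ‖u‖²`; in particular `I − G` is symmetric
positive semidefinite. -/
theorem rom_filter_symmetric_bounded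
    {H : Type*} [NormedAddCommGroup H] [InnerProductSpace ℝ H]
    (Xr : Submodule ℝ H) [FiniteDimensional ℝ Xr]
    (a : H →ₗ[ℝ] H →ₗ[ℝ] ℝ)
    (ha_symm : ∀ u v : H, a u v = a v u)
    (ha_pos : ∀ v : H, 0 ≤ a v v)
    (δ : ℝ) (hδ : 0 < δ)
    (G : H → H)
    (hGmem : ∀ u : H, G u ∈ Xr)
    (hG : ∀ u : H, ∀ v ∈ Xr, δ ^ 2 * a (G u) v + ⟪G u, v⟫ = ⟪u, v⟫) :
    (∀ u w : H, ⟪G u, w⟫ = ⟪u, G w⟫) ∧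
    (∀ u : H, 0 ≤ ⟪G u, u⟫ ∧ ⟪G u, u⟫ ≤ ‖u‖ ^ 2) ∧
    (∀ u w : H, ⟪u - G u, w⟫ = ⟪w - G w, u⟫) ∧
    (∀ u : H, 0 ≤ ⟪u - G u, u⟫) := by

  have hsymm : ∀ u w : H, ⟪G u, w⟫ = ⟪u, G w⟫ := by
    intro u w
    have h1 := hG u (G w) (hGmem w)
    have h2 := hG w (G u) (hGmem u)
    rw [ha_symm (G w) (G u), real_inner_comm (G u) (G w)] at h2
    have : ⟪u, G w⟫ = ⟪w, G u⟫ := by linarith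
    rw [this, real_inner_comm]
  have hposG : ∀ u : H, 0 ≤ ⟪G u, u⟫ := by
    intro u
    have h1 := hG u (G u) (hGmem u)
    have h2 := ha_pos (G u)
    have h3 : (0:ℝ) ≤ ⟪G u, G u⟫ := real_inner_self_nonneg
    have h4 : (0:ℝ) ≤ δ ^ 2 := sq_nonneg δ
    have : (0:ℝ) ≤ ⟪u, G u⟫ := by nlinarith
    rwa [real_inner_comm] at this
  have hnormG : ∀ u : H, ‖G u‖ ≤ ‖u‖ := by
    intro u
    have h1 := hG u (G u) (hGmem u)
    have h2 := ha_pos (G u)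
    have h4 : (0:ℝ) ≤ δ ^ 2 := sq_nonneg δ
    have hcs : ⟪u, G u⟫ ≤ ‖u‖ * ‖G u‖ := real_inner_le_norm u (G u)
    have hself : ⟪G u, G u⟫ = ‖G u‖ ^ 2 := real_inner_self_eq_norm_sq (G u)
    have hsq : ‖G u‖ ^ 2 ≤ ‖u‖ * ‖G u‖ := by nlinarith
    rcases eq_or_lt_of_le (norm_nonneg (G u)) with h | h
    · rw [← h]; exact norm_nonneg u
    · nlinarith
  have hub : ∀ u : H, ⟪G u, u⟫ ≤ ‖u‖ ^ 2 := by
    intro u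
    have hcs : ⟪G u, u⟫ ≤ ‖G u‖ * ‖u‖ := real_inner_le_norm _ _
    have := hnormG u
    nlinarith [norm_nonneg u]
  refine ⟨hsymm, fun u => ⟨hposG u, hub u⟩, ?_, ?_⟩
  · intro u w
    rw [inner_sub_left, inner_sub_left, hsymm u w, real_inner_comm u w,
      real_inner_comm u (G w)]
  · intro u
    rw [inner_sub_left, real_inner_self_eq_norm_sq]
    linarith [hub u, hposG u]
end

section
/- Let H be a real inner product space, let X_r ⊆ H be a finite-dimensional subspace, let a : H × H → ℝ be a symmetric bilinear form with a(v, v) ≥ 0 for all v ∈ H, let δ > 0, and let G_r : H → X_r denote the filter sending u to the unique ū ∈ X_r with δ²·a(ū, v) + ⟨ū, v⟩ = ⟨u, v⟩ for all v ∈ X_r. Then the filter is L²-stable with norm at most one: for all u ∈ H, ‖G_r u‖ ≤ ‖u‖. -/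
open scoped RealInnerProductSpace

/-- **`L²` stability of the ROM differential filter.**
Let `G : H → H` be the ROM differential filter: `G u ∈ Xr` and
`δ² a(G u, v) + ⟪G u, v⟫ = ⟪u, v⟫` for all `v ∈ Xr`, where `Xr` is a finite-dimensional
subspace, `a` a symmetric positive semidefinite bilinear form, and `δ > 0`.
Then `‖G u‖ ≤ ‖u‖` for all `u ∈ H`. -/
theorem rom_filter_L2_stable
    {H : Type*} [NormedAddCommGroup H] [InnerProductSpace ℝ H]
    (Xr : Submodule ℝ H) [FiniteDimensional ℝ Xr]
    (a : H →ₗ[ℝ] H →ₗ[ℝ] ℝ)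
    (ha_symm : ∀ u v : H, a u v = a v u)
    (ha_pos : ∀ v : H, 0 ≤ a v v)
    (δ : ℝ) (hδ : 0 < δ)
    (G : H → H)
    (hGmem : ∀ u : H, G u ∈ Xr)
    (hG : ∀ u : H, ∀ v ∈ Xr, δ ^ 2 * a (G u) v + ⟪G u, v⟫ = ⟪u, v⟫) :
    ∀ u : H, ‖G u‖ ≤ ‖u‖ := by
  intro u
  have h := hG u (G u) (hGmem u)
  have hsq : ‖G u‖ ^ 2 ≤ ‖u‖ * ‖G u‖ := by
    have h1 : (0:ℝ) ≤ δ ^ 2 * a (G u) (G u) :=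
      mul_nonneg (sq_nonneg δ) (ha_pos (G u))
    have h2 : ⟪G u, G u⟫ ≤ ⟪u, G u⟫ := by linarith
    calc ‖G u‖ ^ 2 = ⟪G u, G u⟫ := (real_inner_self_eq_norm_sq (G u)).symm
      _ ≤ ⟪u, G u⟫ := h2
      _ ≤ ‖u‖ * ‖G u‖ := real_inner_le_norm u (G u)
  nlinarith [norm_nonneg (G u), norm_nonneg u]
end

section
/- Let H be a real inner product space, let X_r ⊆ H be a finite-dimensional subspace, let a : H × H → ℝ be a symmetric bilinear form with a(v, v) ≥ 0 for all v ∈ H which is positive definite on X_r (i.e., for v ∈ X_r, a(v, v) = 0 implies v = 0), let δ > 0, and let G_r : H → X_r denote the filter sending u to the unique ū ∈ X_r with δ²·a(ū, v) + ⟨ū, v⟩ = ⟨u, v⟩ for all v ∈ X_r. Then the bilinear form (u, v) ↦ ⟨(I − G_r)u, v⟩ = ⟨u − G_r u, v⟩ is an inner product on H; in particular, I − G_r is strictly positive definite (⟨u − G_r u, u⟩ = 0 implies u = 0) and the map ‖φ‖_* := sqrt(⟨(I − G_r)φ, φ⟩) defines a norm on H. -/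
open scoped RealInnerProductSpace

/-- **The time-relaxation form `⟪(I − G)u, v⟫` is an inner product and `‖·‖_*` is a norm.**
Let `G : H → H` be the ROM differential filter: `G u ∈ Xr` and
`δ² a(G u, v) + ⟪G u, v⟫ = ⟪u, v⟫` for all `v ∈ Xr`, where `Xr` is a finite-dimensional
subspace, `a` a symmetric positive semidefinite bilinear form which is positive definite
on `Xr`, and `δ > 0`.  Then `(u, v) ↦ ⟪u − G u, v⟫` is an inner product on `H`
(bilinear, symmetric, positive, and definite); in particular `I − G` is strictly positive
definite and `φ ↦ sqrt ⟪φ − G φ, φ⟫` is a norm on `H` (vanishing exactly at `0`,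
absolutely homogeneous, and satisfying the triangle inequality). -/
theorem rom_filter_star_norm
    {H : Type*} [NormedAddCommGroup H] [InnerProductSpace ℝ H]
    (Xr : Submodule ℝ H) [FiniteDimensional ℝ Xr]
    (a : H →ₗ[ℝ] H →ₗ[ℝ] ℝ)
    (ha_symm : ∀ u v : H, a u v = a v u)
    (ha_pos : ∀ v : H, 0 ≤ a v v)
    (ha_def : ∀ v ∈ Xr, a v v = 0 → v = 0)
    (δ : ℝ) (hδ : 0 < δ)
    (G : H → H)
    (hGmem : ∀ u : H, G u ∈ Xr)
    (hG : ∀ u : H, ∀ v ∈ Xr, δ ^ 2 * a (G u) v + ⟪G u, v⟫ = ⟪u, v⟫) :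
    (∀ u w : H, ⟪u - G u, w⟫ = ⟪w - G w, u⟫) ∧
    (∀ u u' w : H, ⟪(u + u') - G (u + u'), w⟫ = ⟪u - G u, w⟫ + ⟪u' - G u', w⟫) ∧
    (∀ (c : ℝ) (u w : H), ⟪(c • u) - G (c • u), w⟫ = c * ⟪u - G u, w⟫) ∧
    (∀ u : H, 0 ≤ ⟪u - G u, u⟫) ∧
    (∀ u : H, ⟪u - G u, u⟫ = 0 → u = 0) ∧
    (∀ u : H, Real.sqrt ⟪u - G u, u⟫ = 0 ↔ u = 0) ∧
    (∀ (c : ℝ) (u : H),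
      Real.sqrt ⟪(c • u) - G (c • u), c • u⟫ = |c| * Real.sqrt ⟪u - G u, u⟫) ∧
    (∀ u w : H,
      Real.sqrt ⟪(u + w) - G (u + w), u + w⟫ ≤
        Real.sqrt ⟪u - G u, u⟫ + Real.sqrt ⟪w - G w, w⟫) := by
  -- uniqueness of solutions of the filter problem
  have huniq : ∀ w ∈ Xr, (∀ v ∈ Xr, δ ^ 2 * a w v + ⟪w, v⟫ = 0) → w = 0 := by
    intro w hw h
    have h1 := h w hw
    have h2 : (0:ℝ) ≤ δ ^ 2 * a w w := mul_nonneg (by positivity) (ha_pos w)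
    have h3 : (0:ℝ) ≤ ⟪w, w⟫ := real_inner_self_nonneg
    have h4 : ⟪w, w⟫ = 0 := by linarith
    exact inner_self_eq_zero.mp h4
  -- additivity of G
  have hGadd : ∀ u u' : H, G (u + u') = G u + G u' := by
    intro u u'
    have hw : G (u + u') - (G u + G u') ∈ Xr :=
      Submodule.sub_mem _ (hGmem _) (Submodule.add_mem _ (hGmem u) (hGmem u'))
    have h0 : G (u + u') - (G u + G u') = 0 := by
      refine huniq _ hw ?_
      intro v hv
      have e1 := hG (u + u') v hv
      have e2 := hG u v hv
      have e3 := hG u' v hv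
      have ei : ⟪u + u', v⟫ = ⟪u, v⟫ + ⟪u', v⟫ := inner_add_left u u' v
      have ea : a (G (u + u') - (G u + G u')) v
          = a (G (u + u')) v - (a (G u) v + a (G u') v) := by
        simp [map_sub, map_add]
      have ei2 : ⟪G (u + u') - (G u + G u'), v⟫
          = ⟪G (u + u'), v⟫ - (⟪G u, v⟫ + ⟪G u', v⟫) := by
        rw [inner_sub_left, inner_add_left]
      rw [ea, ei2]; linarith
    exact sub_eq_zero.mp h0
  -- homogeneity of G
  have hGsmul : ∀ (c : ℝ) (u : H), G (c • u) = c • G u := by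
    intro c u
    have hw : G (c • u) - c • G u ∈ Xr :=
      Submodule.sub_mem _ (hGmem _) (Submodule.smul_mem _ c (hGmem u))
    have h0 : G (c • u) - c • G u = 0 := by
      refine huniq _ hw ?_
      intro v hv
      have e1 := hG (c • u) v hv
      have e2 := hG u v hv
      have ei : ⟪c • u, v⟫ = c * ⟪u, v⟫ := real_inner_smul_left u v c
      have ea : a (G (c • u) - c • G u) v = a (G (c • u)) v - c * a (G u) v := by
        simp [map_sub, map_smul]
      have ei2 : ⟪G (c • u) - c • G u, v⟫ = ⟪G (c • u), v⟫ - c * ⟪G u, v⟫ := by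
        rw [inner_sub_left, real_inner_smul_left]
      rw [ea, ei2]; linear_combination e1 - c * e2 + ei
    exact sub_eq_zero.mp h0
  -- cross symmetry
  have hcross : ∀ u w : H, ⟪u, G w⟫ = ⟪w, G u⟫ := by
    intro u w
    have e1 := hG u (G w) (hGmem w)
    have e2 := hG w (G u) (hGmem u)
    have ea : a (G u) (G w) = a (G w) (G u) := ha_symm _ _
    have ei : ⟪G u, G w⟫ = ⟪G w, G u⟫ := real_inner_comm _ _
    linear_combination e2 - e1 + δ ^ 2 * ea + ei
  -- symmetry of the form
  have hsymm : ∀ u w : H, ⟪u - G u, w⟫ = ⟪w - G w, u⟫ := by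
    intro u w
    rw [inner_sub_left, inner_sub_left]
    have h1 : ⟪u, w⟫ = ⟪w, u⟫ := real_inner_comm _ _
    have h2 : ⟪G u, w⟫ = ⟪w, G u⟫ := real_inner_comm _ _
    have h3 : ⟪G w, u⟫ = ⟪u, G w⟫ := real_inner_comm _ _
    have h4 := hcross u w
    linarith
  -- additivity of the form
  have hadd : ∀ u u' w : H,
      ⟪(u + u') - G (u + u'), w⟫ = ⟪u - G u, w⟫ + ⟪u' - G u', w⟫ := by
    intro u u' w
    rw [hGadd]
    rw [show u + u' - (G u + G u') = (u - G u) + (u' - G u') by abel, inner_add_left]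
  -- homogeneity of the form
  have hsmul : ∀ (c : ℝ) (u w : H),
      ⟪(c • u) - G (c • u), w⟫ = c * ⟪u - G u, w⟫ := by
    intro c u w
    rw [hGsmul, ← smul_sub, real_inner_smul_left]
  -- decomposition for positivity
  have hdecomp : ∀ u : H,
      ⟪u - G u, u⟫ = ⟪u - G u, u - G u⟫ + δ ^ 2 * a (G u) (G u) := by
    intro u
    have e := hG u (G u) (hGmem u)
    have : ⟪u - G u, u⟫ = ⟪u - G u, u - G u⟫ + ⟪u - G u, G u⟫ := by
      rw [← inner_add_right]; congr 1; abel
    rw [this]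
    have : ⟪u - G u, G u⟫ = ⟪u, G u⟫ - ⟪G u, G u⟫ := inner_sub_left _ _ _
    rw [this]; linarith
  -- positivity
  have hpos : ∀ u : H, 0 ≤ ⟪u - G u, u⟫ := by
    intro u
    rw [hdecomp]
    have h1 : (0:ℝ) ≤ ⟪u - G u, u - G u⟫ := real_inner_self_nonneg
    have h2 : (0:ℝ) ≤ δ ^ 2 * a (G u) (G u) := mul_nonneg (by positivity) (ha_pos _)
    linarith
  -- definiteness
  have hdef : ∀ u : H, ⟪u - G u, u⟫ = 0 → u = 0 := by
    intro u h
    rw [hdecomp] at h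
    have h1 : (0:ℝ) ≤ ⟪u - G u, u - G u⟫ := real_inner_self_nonneg
    have h2 : (0:ℝ) ≤ δ ^ 2 * a (G u) (G u) := mul_nonneg (by positivity) (ha_pos _)
    have h3 : ⟪u - G u, u - G u⟫ = 0 := by linarith
    have h4 : δ ^ 2 * a (G u) (G u) = 0 := by linarith
    have h5 : u - G u = 0 := inner_self_eq_zero.mp h3
    have h6 : a (G u) (G u) = 0 := by
      have hδ2 : δ ^ 2 ≠ 0 := by positivity
      exact (mul_eq_zero.mp h4).resolve_left hδ2
    have h7 : G u = 0 := ha_def _ (hGmem u) h6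
    have : u = G u := sub_eq_zero.mp h5
    rw [this, h7]
  -- Cauchy–Schwarz for the form
  have hCS : ∀ u w : H, ⟪u - G u, w⟫ ^ 2 ≤ ⟪u - G u, u⟫ * ⟪w - G w, w⟫ := by
    intro u w
    have key : ∀ t : ℝ, 0 ≤ ⟪w - G w, w⟫ * (t * t) + (2 * ⟪u - G u, w⟫) * t + ⟪u - G u, u⟫ := by
      intro t
      have h0 := hpos (u + t • w)
      have e1 : ⟪(u + t • w) - G (u + t • w), u + t • w⟫
          = ⟪u - G u, u + t • w⟫ + t * ⟪w - G w, u + t • w⟫ := by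
        rw [hadd u (t • w) (u + t • w), hsmul t w (u + t • w)]
      have e2 : ⟪u - G u, u + t • w⟫ = ⟪u - G u, u⟫ + t * ⟪u - G u, w⟫ := by
        rw [inner_add_right, real_inner_smul_right]
      have e3 : ⟪w - G w, u + t • w⟫ = ⟪w - G w, u⟫ + t * ⟪w - G w, w⟫ := by
        rw [inner_add_right, real_inner_smul_right]
      have e4 : ⟪w - G w, u⟫ = ⟪u - G u, w⟫ := hsymm w u
      rw [e1, e2, e3, e4] at h0
      nlinarith [h0]
    have hd := discrim_le_zero key
    rw [discrim] at hd
    nlinarith [hd]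
  -- the inner product bound
  have hbound : ∀ u w : H,
      ⟪u - G u, w⟫ ≤ Real.sqrt ⟪u - G u, u⟫ * Real.sqrt ⟪w - G w, w⟫ := by
    intro u w
    have h1 : ⟪u - G u, w⟫ ≤ |⟪u - G u, w⟫| := le_abs_self _
    have h2 : |⟪u - G u, w⟫| = Real.sqrt (⟪u - G u, w⟫ ^ 2) := (Real.sqrt_sq_eq_abs _).symm
    have h3 : Real.sqrt (⟪u - G u, w⟫ ^ 2) ≤ Real.sqrt (⟪u - G u, u⟫ * ⟪w - G w, w⟫) :=
      Real.sqrt_le_sqrt (hCS u w)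
    have h4 : Real.sqrt (⟪u - G u, u⟫ * ⟪w - G w, w⟫)
        = Real.sqrt ⟪u - G u, u⟫ * Real.sqrt ⟪w - G w, w⟫ := Real.sqrt_mul (hpos u) _
    linarith
  refine ⟨hsymm, hadd, hsmul, hpos, hdef, ?_, ?_, ?_⟩
  · intro u
    constructor
    · intro h
      have := Real.sqrt_eq_zero (hpos u) |>.mp h
      exact hdef u this
    · intro h; subst h
      have : G (0:H) = 0 := by
        have := hGsmul 0 0; simpa using this
      simp [this]
  · intro c u
    have e : ⟪(c • u) - G (c • u), c • u⟫ = c ^ 2 * ⟪u - G u, u⟫ := by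
      rw [hsmul c u (c • u), real_inner_smul_right]; ring
    rw [e, show c ^ 2 = |c| ^ 2 by rw [sq_abs],
      Real.sqrt_mul (by positivity), Real.sqrt_sq (abs_nonneg c)]
  · intro u w
    have e : ⟪(u + w) - G (u + w), u + w⟫
        = ⟪u - G u, u⟫ + 2 * ⟪u - G u, w⟫ + ⟪w - G w, w⟫ := by
      rw [hadd u w (u + w), inner_add_right, inner_add_right]
      have := hsymm w u
      linarith
    have hb := hbound u w
    set A := Real.sqrt ⟪u - G u, u⟫ with hA
    set B := Real.sqrt ⟪w - G w, w⟫ with hB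
    have hA2 : A ^ 2 = ⟪u - G u, u⟫ := Real.sq_sqrt (hpos u)
    have hB2 : B ^ 2 = ⟪w - G w, w⟫ := Real.sq_sqrt (hpos w)
    have hle : ⟪(u + w) - G (u + w), u + w⟫ ≤ (A + B) ^ 2 := by
      rw [e]; nlinarith [hb]
    calc Real.sqrt ⟪(u + w) - G (u + w), u + w⟫
        ≤ Real.sqrt ((A + B) ^ 2) := Real.sqrt_le_sqrt hle
      _ = A + B := Real.sqrt_sq (by positivity)
end

section
/- Let X be a finite-dimensional real inner product space, let a : X × X → ℝ be a symmetric bilinear form that is positive definite on X, let b : X × X × X → ℝ be a trilinear form satisfying b(u, v, v) = 0 for all u, v ∈ X, let c : X × X → ℝ be a symmetric bilinear form with c(v, v) ≥ 0 for all v ∈ X, and let ν > 0, χ ≥ 0, Δt > 0. Let f¹, …, f^M ∈ X, and for each n let F_{n+1} ≥ 0 be such that ⟨f^{n+1}, v⟩ ≤ F_{n+1}·sqrt(a(v, v)) for all v ∈ X. Suppose u⁰ ∈ X and u¹, …, u^M ∈ X satisfy, for every n = 0, …, M−1 and every v ∈ X, (1/Δt)·⟨u^{n+1} − u^n, v⟩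 + b(u^{n+1}, u^{n+1}, v) + ν·a(u^{n+1}, v) + χ·c(u^{n+1}, v) = ⟨f^{n+1}, v⟩. Then the following unconditional stability bound holds for any Δt > 0: ‖u^M‖² + ν·Δt·Σ_{n=0}^{M−1} a(u^{n+1}, u^{n+1}) + 2χ·Δt·Σ_{n=0}^{M−1} c(u^{n+1}, u^{n+1}) ≤ ‖u⁰‖² + (Δt/ν)·Σ_{n=0}^{M−1} F_{n+1}². -/
open scoped RealInnerProductSpace

/-- **Unconditional stability of the TR-ROM.**
Let `X` be a finite-dimensional real inner product space, `a` a symmetric positive definite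
bilinear form, `b` a trilinear form with `b u v v = 0`, `c` a symmetric positive semidefinite
bilinear form, `ν > 0`, `χ ≥ 0`, `Δt > 0`.  Let `f (n+1) ∈ X` with `⟪f (n+1), v⟫ ≤
F (n+1) * sqrt (a v v)`, `F (n+1) ≥ 0`.  If `u 0, …, u M` satisfy the backward-Euler
time-relaxation scheme
`(1/Δt)⟪u (n+1) − u n, v⟫ + b (u (n+1)) (u (n+1)) v + ν a (u (n+1)) v + χ c (u (n+1)) v
  = ⟪f (n+1), v⟫` for all `v ∈ X` and `n < M`, then
`‖u M‖² + ν Δt Σ_{n<M} a (u (n+1)) (u (n+1)) + 2 χ Δt Σ_{n<M} c (u (n+1)) (u (n+1))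
  ≤ ‖u 0‖² + (Δt/ν) Σ_{n<M} (F (n+1))²`. -/
theorem trrom_unconditional_stability
    {X : Type*} [NormedAddCommGroup X] [InnerProductSpace ℝ X] [FiniteDimensional ℝ X]
    (a : X →ₗ[ℝ] X →ₗ[ℝ] ℝ)
    (ha_symm : ∀ u v : X, a u v = a v u)
    (ha_pos : ∀ v : X, 0 ≤ a v v)
    (ha_def : ∀ v : X, a v v = 0 → v = 0)
    (b : X →ₗ[ℝ] X →ₗ[ℝ] X →ₗ[ℝ] ℝ)
    (hb : ∀ u v : X, b u v v = 0)
    (c : X →ₗ[ℝ] X →ₗ[ℝ] ℝ)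
    (hc_symm : ∀ u v : X, c u v = c v u)
    (hc_pos : ∀ v : X, 0 ≤ c v v)
    (ν χ Δt : ℝ) (hν : 0 < ν) (hχ : 0 ≤ χ) (hΔt : 0 < Δt)
    (M : ℕ) (f : ℕ → X) (F : ℕ → ℝ)
    (hF_nonneg : ∀ n < M, 0 ≤ F (n + 1))
    (hF : ∀ n < M, ∀ v : X, ⟪f (n + 1), v⟫ ≤ F (n + 1) * Real.sqrt (a v v))
    (u : ℕ → X)
    (hscheme : ∀ n < M, ∀ v : X,
      (1 / Δt) * ⟪u (n + 1) - u n, v⟫ + b (u (n + 1)) (u (n + 1)) v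
        + ν * a (u (n + 1)) v + χ * c (u (n + 1)) v = ⟪f (n + 1), v⟫) :
    ‖u M‖ ^ 2 + ν * Δt * ∑ n ∈ Finset.range M, a (u (n + 1)) (u (n + 1))
        + 2 * χ * Δt * ∑ n ∈ Finset.range M, c (u (n + 1)) (u (n + 1))
      ≤ ‖u 0‖ ^ 2 + (Δt / ν) * ∑ n ∈ Finset.range M, (F (n + 1)) ^ 2 := by
  have hΔ : Δt ≠ 0 := ne_of_gt hΔt
  have hνne : ν ≠ 0 := ne_of_gt hν
  have key : ∀ n < M,
      ‖u (n+1)‖ ^ 2 + ν * Δt * a (u (n+1)) (u (n+1)) + 2 * χ * Δt * c (u (n+1)) (u (n+1))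
        ≤ ‖u n‖ ^ 2 + (Δt / ν) * (F (n+1)) ^ 2 := by
    intro n hn
    have hs := hscheme n hn (u (n+1))
    rw [hb] at hs
    set A := a (u (n+1)) (u (n+1)) with hA
    set C := c (u (n+1)) (u (n+1)) with hC
    have hA0 : 0 ≤ A := ha_pos _
    have hC0 : 0 ≤ C := hc_pos _
    have hFn : 0 ≤ F (n+1) := hF_nonneg n hn
    have hP : ⟪f (n+1), u (n+1)⟫ ≤ F (n+1) * Real.sqrt A := hF n hn (u (n+1))
    have hI : ⟪u (n+1) - u n, u (n+1)⟫ = ‖u (n+1)‖ ^ 2 - ⟪u n, u (n+1)⟫ := by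
      rw [inner_sub_left, real_inner_self_eq_norm_sq]
    have hQ : ⟪u n, u (n+1)⟫ ≤ ‖u n‖ * ‖u (n+1)‖ := real_inner_le_norm _ _
    -- Young's inequality: 2νF√A ≤ F² + ν²A
    have hsq : Real.sqrt A ^ 2 = A := Real.sq_sqrt hA0
    have hy : 2 * ν * (F (n+1) * Real.sqrt A) ≤ F (n+1) ^ 2 + ν ^ 2 * A := by
      nlinarith [sq_nonneg (F (n+1) - ν * Real.sqrt A)]
    field_simp at hs
    -- divide hy by ν to get the Δt/ν form
    have hy' : 2 * Δt * (F (n+1) * Real.sqrt A) ≤ (Δt / ν) * F (n+1) ^ 2 + ν * Δt * A := by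
      have h3 : Δt / ν > 0 := div_pos hΔt hν
      have := mul_le_mul_of_nonneg_left hy (le_of_lt h3)
      calc 2 * Δt * (F (n+1) * Real.sqrt A)
          = (Δt / ν) * (2 * ν * (F (n+1) * Real.sqrt A)) := by field_simp
        _ ≤ (Δt / ν) * (F (n+1) ^ 2 + ν ^ 2 * A) := this
        _ = (Δt / ν) * F (n+1) ^ 2 + ν * Δt * A := by field_simp
    nlinarith [sq_nonneg (‖u n‖ - ‖u (n+1)‖), mul_le_mul_of_nonneg_left hP
      (by linarith : (0:ℝ) ≤ 2 * Δt)]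
  -- telescoping induction
  suffices H : ∀ m, m ≤ M →
      ‖u m‖ ^ 2 + ν * Δt * ∑ n ∈ Finset.range m, a (u (n + 1)) (u (n + 1))
        + 2 * χ * Δt * ∑ n ∈ Finset.range m, c (u (n + 1)) (u (n + 1))
      ≤ ‖u 0‖ ^ 2 + (Δt / ν) * ∑ n ∈ Finset.range m, (F (n + 1)) ^ 2 from H M le_rfl
  intro m
  induction m with
  | zero => simp
  | succ k ih =>
    intro h
    have hk : k < M := h
    have hih := ih (Nat.le_of_succ_le h)
    have hkey := key k hk
    rw [Finset.sum_range_succ, Finset.sum_range_succ, Finset.sum_range_succ,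
      mul_add, mul_add, mul_add]
    linarith
end
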